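/- (Corollary) Under the hypotheses of the main theorem, for any positive integer α, if μ < ((πT^α)_{i+1}/(πT^α)_i)·ν for all 1 ≤ i ≤ K−1 (with (πT^α)_i > 0), then π·T^α·(T − I)·Δᵀ > 0, i.e., applying one additional RTL pass after α passes strictly increases expected MRR. -/

import Mathlib

open Matrix

/-- The RTL transition matrix on `Fin K` (position `i : Fin K` corresponds to rank `i+1`). -/
noncomputable def rtlT (K : ℕ) (μ ν : ℝ) : Matrix (Fin K) (Fin K) ℝ :=
  Matrix.of fun i j =>
    if i.val + 1 < K then
      if j.val = i.val + 1 then μ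
      else if 0 < j.val ∧ j.val ≤ i.val then (1 - μ) * (1 - ν) * ν ^ (i.val - j.val)
      else if j.val = 0 then (1 - μ) * ν ^ i.val
      else 0
    else
      if j.val = 0 then ν ^ (K - 1)
      else (1 - ν) * ν ^ (K - 1 - j.val)

/-- The MRR metric vector `Δ_k = 1/k` (rank `k = i+1` for `i : Fin K`). -/
noncomputable def mrr (K : ℕ) : Fin K → ℝ := fun i => 1 / ((i.val : ℝ) + 1)

/-!
Write `A n` for the expected metric value of an item that the RTL pass moves up from
position `n` (`upAvg`), so that `A (n + 1) - Δ (n + 1) = ν (A n - Δ (n + 1))`. Summation by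
parts turns the gain `q (T - I) Δᵀ` into `∑_{n < K - 1} (ν q (n + 1) - μ q n) (A n - Δ (n + 1))`.
For strictly decreasing `Δ` one has `A n ≥ Δ n > Δ (n + 1)`, and the ratio condition on
`q = π T^α` makes every coefficient `ν q (n + 1) - μ q n` positive.
-/

open Finset

/-- Conditional on not moving down, the probability that an RTL pass takes the item at
position `n` to position `j ≤ n`; the last row of `rtlT` is `upWeight ν (K - 1)`. -/
def upWeight (ν : ℝ) (n j : ℕ) : ℝ := if j = 0 then ν ^ n else (1 - ν) * ν ^ (n - j)

noncomputable def upAvg (ν : ℝ) (D : ℕ → ℝ) (n : ℕ) : ℝ :=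
  ∑ j ∈ range (n + 1), upWeight ν n j * D j

section upAvg

variable (ν : ℝ) (D : ℕ → ℝ)

variable {ν} in
lemma upWeight_succ_of_le {n j : ℕ} (h : j ≤ n) : upWeight ν (n + 1) j = ν * upWeight ν n j := by
  unfold upWeight
  split_ifs
  · ring
  · rw [Nat.sub_add_comm h, pow_succ]; ring

@[simp]
lemma upAvg_zero : upAvg ν D 0 = D 0 := by
  simp [upAvg, upWeight]

lemma upAvg_succ (n : ℕ) : upAvg ν D (n + 1) = ν * upAvg ν D n + (1 - ν) * D (n + 1) := by
  rw [upAvg, sum_range_succ, upAvg, mul_sum]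
  congr 1
  · refine sum_congr rfl fun j hj => ?_
    rw [upWeight_succ_of_le (Nat.lt_succ_iff.mp (mem_range.mp hj)), mul_assoc]
  · simp [upWeight]

lemma upAvg_succ_sub (n : ℕ) :
    upAvg ν D (n + 1) - D (n + 1) = ν * (upAvg ν D n - D (n + 1)) := by
  rw [upAvg_succ]; ring

variable {ν D} in
lemma le_upAvg (hν : 0 ≤ ν) (hD : Antitone D) (n : ℕ) : D n ≤ upAvg ν D n := by
  induction n with
  | zero => simp
  | succ n ih =>
    have := mul_nonneg hν (sub_nonneg.2 ((hD n.le_succ).trans ih))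
    linarith [upAvg_succ_sub ν D n]

lemma sum_rtl_gain_eq (μ : ℝ) (Q : ℕ → ℝ) (M : ℕ) :
    ∑ n ∈ range M, Q n * (μ * D (n + 1) + (1 - μ) * upAvg ν D n - D n)
        + Q M * (upAvg ν D M - D M) =
      ∑ n ∈ range M, (ν * Q (n + 1) - μ * Q n) * (upAvg ν D n - D (n + 1)) := by
  induction M with
  | zero => simp
  | succ M ih =>
    rw [sum_range_succ, sum_range_succ, ← ih]
    linear_combination Q (M + 1) * upAvg_succ_sub ν D M

end upAvg

noncomputable def rtlEntry (K : ℕ) (μ ν : ℝ) (i j : ℕ) : ℝ :=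
  if i + 1 < K then
    if j = i + 1 then μ
    else if 0 < j ∧ j ≤ i then (1 - μ) * (1 - ν) * ν ^ (i - j)
    else if j = 0 then (1 - μ) * ν ^ i
    else 0
  else upWeight ν (K - 1) j

lemma rtlT_apply (K : ℕ) (μ ν : ℝ) (i j : Fin K) : rtlT K μ ν i j = rtlEntry K μ ν i j := rfl

lemma sum_rtlEntry_mul (K : ℕ) (μ ν : ℝ) (D : ℕ → ℝ) {i : ℕ} (hi : i < K) :
    ∑ j ∈ range K, rtlEntry K μ ν i j * D j =
      if i + 1 < K then μ * D (i + 1) + (1 - μ) * upAvg ν D i else upAvg ν D i := by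
  split_ifs with h
  · obtain ⟨r, rfl⟩ : ∃ r, K = i + 1 + 1 + r := ⟨K - (i + 2), by omega⟩
    rw [sum_range_add, sum_range_succ, upAvg, mul_sum]
    have hout : ∀ j ∈ range r,
        rtlEntry (i + 1 + 1 + r) μ ν i (i + 1 + 1 + j) * D (i + 1 + 1 + j) = 0 := fun j _ => by
      simp only [rtlEntry, if_pos h]
      rw [if_neg (by omega), if_neg (by omega), if_neg (by omega), zero_mul]
    rw [sum_eq_zero hout, add_zero, add_comm]
    congr 1
    · simp [rtlEntry, h]
    · refine sum_congr rfl fun j hj => ?_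
      have hj := mem_range.1 hj
      simp only [rtlEntry, if_pos h, upWeight]
      split_ifs <;> first | (exfalso; omega) | ring
  · obtain ⟨M, rfl⟩ : ∃ M, K = M + 1 := ⟨K - 1, by omega⟩
    obtain rfl : i = M := by omega
    simp only [rtlEntry, lt_irrefl, if_false, upAvg, Nat.add_sub_cancel]

lemma rtlT_mulVec_apply {K : ℕ} (μ ν : ℝ) (D : ℕ → ℝ) (i : Fin K) :
    (rtlT K μ ν *ᵥ fun j : Fin K => D j) i =
      if i.val + 1 < K then μ * D (i + 1) + (1 - μ) * upAvg ν D i else upAvg ν D i := by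
  simp only [mulVec, dotProduct, rtlT_apply]
  rw [Fin.sum_univ_eq_sum_range (fun j => rtlEntry K μ ν i j * D j),
    sum_rtlEntry_mul K μ ν D i.isLt]

theorem rtl_gain_pos {K : ℕ} (hK : 2 ≤ K) {μ ν : ℝ} (hν : 0 ≤ ν) {D : ℕ → ℝ}
    (hD : StrictAnti D) (q : Fin K → ℝ) (hq : ∀ i : Fin K, (h : i.val + 1 < K) → μ * q i < ν * q ⟨i.val + 1, h⟩) :
    0 < vecMul q (rtlT K μ ν - 1) ⬝ᵥ fun i : Fin K => D i := by
  obtain ⟨M, rfl⟩ : ∃ M, K = M + 1 := ⟨K - 1, by omega⟩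
  set Q : ℕ → ℝ := fun n => if h : n < M + 1 then q ⟨n, h⟩ else 0
  have hQ : ∀ i : Fin (M + 1), q i = Q i := fun i => by simp only [Q, dif_pos i.isLt]
  have hgain : vecMul q (rtlT (M + 1) μ ν - 1) ⬝ᵥ (fun i : Fin (M + 1) => D i) =
      ∑ n ∈ range M, (ν * Q (n + 1) - μ * Q n) * (upAvg ν D n - D (n + 1)) := by
    rw [← sum_rtl_gain_eq, ← Fin.sum_univ_eq_sum_range, ← dotProduct_mulVec, sub_mulVec,
      one_mulVec, dotProduct, Fin.sum_univ_castSucc]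
    simp only [Pi.sub_apply, rtlT_mulVec_apply, hQ, Fin.val_castSucc, Fin.val_last,
      add_lt_add_iff_right, Fin.is_lt, if_true, lt_irrefl, if_false]
  rw [hgain]
  refine sum_pos (fun n hn => mul_pos ?_ ?_) (nonempty_range_iff.2 (by omega))
  · have hn := mem_range.1 hn
    have hqn := hq ⟨n, by omega⟩ (by simp only; omega)
    simp only [hQ] at hqn
    linarith
  · linarith [le_upAvg hν hD.antitone n, hD n.lt_succ_self]

theorem rtl_gain_pos_iterated_general (K : ℕ) (hK : 2 ≤ K) (μ ν : ℝ)
    (hν : ν ∈ Set.Ioo (0:ℝ) 1)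
    (π : Fin K → ℝ)
    (α : ℕ)
    (hqpos : ∀ i : Fin K, 0 < Matrix.vecMul π (rtlT K μ ν ^ α) i)
    (hcond : ∀ i : Fin K, (h : i.val + 1 < K) →
      μ < (Matrix.vecMul π (rtlT K μ ν ^ α) ⟨i.val + 1, h⟩ /
            Matrix.vecMul π (rtlT K μ ν ^ α) i) * ν) :
    0 < dotProduct
        (Matrix.vecMul (Matrix.vecMul π (rtlT K μ ν ^ α)) (rtlT K μ ν - 1)) (mrr K) := by
  have hmrr : StrictAnti fun n : ℕ => 1 / ((n : ℝ) + 1) :=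
    strictAnti_nat_of_succ_lt fun n => by
      push_cast
      exact one_div_lt_one_div_of_lt (by positivity) (by linarith)
  refine rtl_gain_pos hK hν.1.le hmrr _ fun i h => ?_
  have hi := hcond i h
  rwa [div_mul_eq_mul_div, lt_div_iff₀ (hqpos i), mul_comm _ ν] at hi

/-- Corollary: if after `α` RTL passes the state distribution `πT^α` still satisfies the
ratio condition, then one additional RTL pass strictly increases the expected MRR. -/
theorem rtl_gain_pos_iterated (K : ℕ) (hK : 2 ≤ K) (μ ν : ℝ)
    (hμ : μ ∈ Set.Ioo (0:ℝ) 1) (hν : ν ∈ Set.Ioo (0:ℝ) 1)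
    (π : Fin K → ℝ) (hpos : ∀ i, 0 < π i) (hsum : ∑ i, π i = 1)
    (α : ℕ) (hα : 1 ≤ α)
    (hqpos : ∀ i : Fin K, 0 < Matrix.vecMul π (rtlT K μ ν ^ α) i)
    (hcond : ∀ i : Fin K, (h : i.val + 1 < K) →
      μ < (Matrix.vecMul π (rtlT K μ ν ^ α) ⟨i.val + 1, h⟩ /
            Matrix.vecMul π (rtlT K μ ν ^ α) i) * ν) :
    0 < dotProduct
        (Matrix.vecMul (Matrix.vecMul π (rtlT K μ ν ^ α)) (rtlT K μ ν - 1)) (mrr K) :=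
  rtl_gain_pos_iterated_general K hK μ ν hν π α hqpos hcond
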